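/- Let (x_m)_{m≥0} be the k-averaging process on ℝ^n with n > k ≥ 2, started from a deterministic vector x_0 with ∑_{i=1}^n x_{0,i} = 0, let S_n(l) = ∑_{i=1}^n x_{l,i}², let F_l be the σ-algebra generated by the process up to time l, and let τ = 1 − (k−1)/(n−1). Then M_l := S_n(l)/τ^l is a nonnegative martingale with respect to the filtration (F_l)_{l≥0}, and consequently the limit lim_{l→∞} S_n(l)/τ^l exists and is finite almost surely. -/

import Mathlib

/-!
Averaging the coordinates of `x` over a `k`-set `s` turns `∑ xᵢ²` into
`∑ xᵢ² - ∑_{i ∈ s} xᵢ² + (∑_{i ∈ s} xᵢ)² / k` and preserves `∑ xᵢ`. Every index lies in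
`C(n-1, k-1)` of the `k`-sets and every pair of distinct indices in `C(n-2, k-2)`, so for a
mean-zero `x` the new value of `∑ xᵢ²`, averaged over the uniformly chosen set, is `τ ∑ xᵢ²`.
The set chosen at time `l` is independent of the past, hence `E[S(l+1) | F_l] = τ S(l)` and
`S(l) / τ^l` is a martingale. Being nonnegative, it is bounded in `L¹` by its constant mean, so it
converges almost surely by Doob's convergence theorem.
-/

open MeasureTheory ProbabilityTheory Filter

noncomputable section

instance (α : Type*) : MeasurableSpace (Finset α) := ⊤

/-- One averaging step: replace all coordinates in `A` by their average. -/
def avgStep {n : ℕ} (k : ℕ) (A : Finset (Fin n)) (x : Fin n → ℝ) : Fin n → ℝ :=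
  fun i => if i ∈ A then (∑ j ∈ A, x j) / k else x i

/-- The `k`-averaging process driven by the sequence of chosen subsets `A · ω`. -/
def proc {Ω : Type*} {n : ℕ} (k : ℕ) (x0 : Fin n → ℝ) (A : ℕ → Ω → Finset (Fin n))
    (ω : Ω) : ℕ → Fin n → ℝ
  | 0 => x0
  | m + 1 => avgStep k (A m ω) (proc k x0 A ω m)

namespace Finset

variable {α : Type*} [DecidableEq α]

theorem card_filter_superset_powersetCard {t u : Finset α} (htu : t ⊆ u)
    {k : ℕ} (hk : #t ≤ k) :
    #{s ∈ u.powersetCard k | t ⊆ s} = (#u - #t).choose (k - #t) := by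
  rw [← card_sdiff_of_subset htu, ← card_powersetCard]
  refine card_bij' (fun s _ => s \ t) (fun r _ => r ∪ t) ?_ ?_ ?_ ?_
  · intro s hs
    simp only [mem_filter, mem_powersetCard] at hs ⊢
    exact ⟨sdiff_subset_sdiff hs.1.1 le_rfl, by rw [card_sdiff_of_subset hs.2, hs.1.2]⟩
  · intro r hr
    simp only [mem_powersetCard, mem_filter] at hr ⊢
    have hdisj : Disjoint r t := disjoint_of_subset_left hr.1 sdiff_disjoint
    refine ⟨⟨union_subset (hr.1.trans sdiff_subset) htu, ?_⟩, subset_union_right⟩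
    rw [card_union_of_disjoint hdisj, hr.2]
    omega
  · intro s hs
    exact sdiff_union_of_subset (mem_filter.mp hs).2
  · intro r hr
    exact union_sdiff_cancel_right
      (disjoint_of_subset_left (mem_powersetCard.mp hr).1 sdiff_disjoint)

variable [Fintype α]

theorem sum_sum_eq_sum_card_filter_mem {β M : Type*} [AddCommMonoid M]
    (P : Finset β) (t : β → Finset α) (f : α → M) :
    ∑ b ∈ P, ∑ a ∈ t b, f a = ∑ a, #{b ∈ P | a ∈ t b} • f a := by
  rw [sum_comm' (t' := univ) (s' := fun a => {b ∈ P | a ∈ t b}) (by simp)]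
  simp only [sum_const]

theorem sum_sum_ite_mul_mul {R : Type*} [CommRing R] (x : α → R) (a b : R) :
    ∑ i, ∑ j, (if i = j then a else b) * (x i * x j)
      = (a - b) * ∑ i, x i ^ 2 + b * (∑ i, x i) ^ 2 := by
  have h : ∀ i j, (if i = j then a else b) * (x i * x j)
      = (if i = j then (a - b) * x i ^ 2 else 0) + b * (x i * x j) := by
    intro i j
    split_ifs with hij
    · rw [hij]
      ring
    · simp
  simp_rw [h, sum_add_distrib, sum_ite_eq, if_pos (mem_univ _), ← mul_sum]
  rw [sq (∑ i, x i), sum_mul]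

variable {k : ℕ}

theorem card_powersetCard_univ_filter_mem (hk : 1 ≤ k) (i : α) :
    #{s ∈ univ.powersetCard k | i ∈ s} = (Fintype.card α - 1).choose (k - 1) := by
  simpa using card_filter_superset_powersetCard (subset_univ {i}) (k := k) (by simpa using hk)

theorem card_powersetCard_univ_filter_mem_mem (hk : 2 ≤ k) (i j : α) :
    #{s ∈ univ.powersetCard k | i ∈ s ∧ j ∈ s}
      = if i = j then (Fintype.card α - 1).choose (k - 1)
        else (Fintype.card α - 2).choose (k - 2) := by
  have hpair : ∀ s : Finset α, i ∈ s ∧ j ∈ s ↔ {i, j} ⊆ s := by simp [insert_subset_iff]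
  simp_rw [hpair]
  rw [card_filter_superset_powersetCard (subset_univ _) (card_le_two.trans hk), card_univ]
  split_ifs with hij
  · simp [hij]
  · rw [card_pair hij]

variable {R : Type*} [CommRing R]

theorem sum_powersetCard_univ_sum_sq (hk : 1 ≤ k) (x : α → R) :
    ∑ s ∈ univ.powersetCard k, ∑ i ∈ s, x i ^ 2
      = (Fintype.card α - 1).choose (k - 1) * ∑ i, x i ^ 2 := by
  simp [sum_sum_eq_sum_card_filter_mem, card_powersetCard_univ_filter_mem hk, mul_sum]

theorem sum_powersetCard_univ_sq_sum (hk : 2 ≤ k) (x : α → R) :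
    ∑ s ∈ univ.powersetCard k, (∑ i ∈ s, x i) ^ 2
      = ((Fintype.card α - 1).choose (k - 1) - (Fintype.card α - 2).choose (k - 2))
          * ∑ i, x i ^ 2 + (Fintype.card α - 2).choose (k - 2) * (∑ i, x i) ^ 2 := by
  have hsq : ∀ s : Finset α, (∑ i ∈ s, x i) ^ 2 = ∑ p ∈ s ×ˢ s, x p.1 * x p.2 := fun s => by
    rw [sq, sum_mul_sum, sum_product]
  rw [sum_congr rfl fun s _ => hsq s]
  simp_rw [sum_sum_eq_sum_card_filter_mem, mem_product, Fintype.sum_prod_type,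
    card_powersetCard_univ_filter_mem_mem hk, nsmul_eq_mul]
  push_cast [apply_ite]
  exact sum_sum_ite_mul_mul x _ _

end Finset

def avgRate (n k : ℕ) : ℝ := 1 - ((k : ℝ) - 1) / ((n : ℝ) - 1)

theorem avgRate_pos {n k : ℕ} (hk : 1 ≤ k) (hkn : k < n) : 0 < avgRate n k := by
  have hk' : (1 : ℝ) ≤ k := by exact_mod_cast hk
  have hkn' : (k : ℝ) < n := by exact_mod_cast hkn
  rw [avgRate, sub_pos, div_lt_one (by linarith)]
  linarith

section AveragingStep

open Finset

variable {n k : ℕ}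

theorem sum_comp_avgStep {M : Type*} [AddCommMonoid M] (f : ℝ → M) (s : Finset (Fin n))
    (x : Fin n → ℝ) :
    ∑ i, f (avgStep k s x i) = #s • f ((∑ j ∈ s, x j) / k) + ∑ i ∈ sᶜ, f (x i) := by
  rw [← sum_add_sum_compl s, ← sum_const]
  congr 1
  · exact sum_congr rfl fun i hi => by simp [avgStep, hi]
  · exact sum_congr rfl fun i hi => by simp [avgStep, mem_compl.mp hi]

theorem sum_avgStep {s : Finset (Fin n)} (hs : #s = k) (hk : k ≠ 0) (x : Fin n → ℝ) :
    ∑ i, avgStep k s x i = ∑ i, x i := by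
  refine (sum_comp_avgStep id s x).trans ?_
  rw [hs, ← sum_add_sum_compl s x, nsmul_eq_mul]
  simp only [id]
  field_simp

theorem sum_sq_avgStep {s : Finset (Fin n)} (hs : #s = k) (x : Fin n → ℝ) :
    ∑ i, avgStep k s x i ^ 2 = ∑ i, x i ^ 2 - ∑ i ∈ s, x i ^ 2 + (∑ i ∈ s, x i) ^ 2 / k := by
  rw [sum_comp_avgStep (· ^ 2), hs, ← sum_add_sum_compl s (x · ^ 2), nsmul_eq_mul]
  rcases eq_or_ne k 0 with rfl | hk
  · simp
  · field_simp
    ring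

theorem sum_powersetCard_sum_sq_avgStep (hk : 2 ≤ k) (hkn : k ≤ n) {x : Fin n → ℝ}
    (hx : ∑ i, x i = 0) :
    ∑ s ∈ univ.powersetCard k, ∑ i, avgStep k s x i ^ 2
      = n.choose k * avgRate n k * ∑ i, x i ^ 2 := by
  rw [sum_congr rfl fun s hs => sum_sq_avgStep (mem_powersetCard.mp hs).2 x,
    sum_add_distrib, sum_sub_distrib, ← sum_div, sum_powersetCard_univ_sum_sq (by omega),
    sum_powersetCard_univ_sq_sum hk, hx, sum_const, card_powersetCard, card_univ,
    Fintype.card_fin, avgRate]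
  obtain ⟨m, rfl⟩ : ∃ m, n = m + 2 := ⟨n - 2, by omega⟩
  obtain ⟨j, rfl⟩ : ∃ j, k = j + 2 := ⟨k - 2, by omega⟩
  have h₁ : ((m + 2 : ℕ) : ℝ) * (m + 1).choose (j + 1) = (m + 2).choose (j + 2) * (j + 2) := by
    exact_mod_cast Nat.add_one_mul_choose_eq (m + 1) (j + 1)
  have h₂ : ((m + 1 : ℕ) : ℝ) * m.choose j = (m + 1).choose (j + 1) * (j + 1) := by
    exact_mod_cast Nat.add_one_mul_choose_eq m j
  simp only [add_tsub_cancel_right, nsmul_eq_mul]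
  push_cast at h₁ h₂ ⊢
  rw [show (m : ℝ) + 2 - 1 = m + 1 by ring]
  field_simp
  linear_combination -(∑ i, x i ^ 2) * ((j + 1) * h₁ + h₂)

theorem measurable_avgStep (s : Finset (Fin n)) : Measurable (avgStep k s) := by
  refine measurable_pi_lambda _ fun i => ?_
  by_cases hi : i ∈ s <;> simp only [avgStep, hi, if_true, if_false] <;> fun_prop

theorem norm_avgStep_le (hk : 1 ≤ k) (s : Finset (Fin n)) (x : Fin n → ℝ) :
    ‖avgStep k s x‖ ≤ n * ‖x‖ := by
  refine (pi_norm_le_iff_of_nonneg (by positivity)).mpr fun i => ?_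
  by_cases hi : i ∈ s
  · simp only [avgStep, hi, if_true, norm_div, RCLike.norm_natCast]
    calc ‖∑ j ∈ s, x j‖ / k ≤ ‖∑ j ∈ s, x j‖ := div_le_self (norm_nonneg _) (by exact_mod_cast hk)
      _ ≤ ∑ _j ∈ s, ‖x‖ := norm_sum_le_of_le s fun j _ => norm_le_pi_norm x j
      _ ≤ n * ‖x‖ := by
        rw [sum_const, nsmul_eq_mul]
        gcongr
        exact_mod_cast card_le_univ s |>.trans_eq (Fintype.card_fin n)
  · simp only [avgStep, hi, if_false]
    have hn : (1 : ℝ) ≤ n := by exact_mod_cast i.pos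
    exact (norm_le_pi_norm x i).trans (le_mul_of_one_le_left (norm_nonneg x) hn)

end AveragingStep

section AveragingProcess

open Finset

variable {Ω : Type*} {n k : ℕ} (x0 : Fin n → ℝ) (A : ℕ → Ω → Finset (Fin n))

theorem proc_succ (ω : Ω) (m : ℕ) :
    proc k x0 A ω (m + 1) = avgStep k (A m ω) (proc k x0 A ω m) := rfl

theorem measurable_proc (m : ℕ) :
    Measurable[⨆ j ∈ Set.Iio m, MeasurableSpace.comap (A j) inferInstance]
      fun ω => proc k x0 A ω m := by
  induction m with
  | zero => exact measurable_const
  | succ m ih =>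
    have hmono : (⨆ j ∈ Set.Iio m, MeasurableSpace.comap (A j) inferInstance)
        ≤ ⨆ j ∈ Set.Iio (m + 1), MeasurableSpace.comap (A j) inferInstance :=
      biSup_mono fun j hj => Set.Iio_subset_Iio m.le_succ hj
    have hA : Measurable[⨆ j ∈ Set.Iio (m + 1), MeasurableSpace.comap (A j) inferInstance]
        (A m) :=
      comap_measurable (A m) |>.mono (le_biSup (fun j => MeasurableSpace.comap (A j) _)
        (Set.mem_Iio.mpr m.lt_succ_self)) le_rfl
    exact (measurable_from_prod_countable_left
      (f := fun p : (Fin n → ℝ) × Finset (Fin n) => avgStep k p.2 p.1)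
      fun s => measurable_avgStep s).comp ((ih.mono hmono le_rfl).prodMk hA)

theorem norm_proc_le (hk : 1 ≤ k) (ω : Ω) (m : ℕ) :
    ‖proc k x0 A ω m‖ ≤ n ^ m * ‖x0‖ := by
  induction m with
  | zero => simp [proc]
  | succ m ih =>
    rw [proc_succ, pow_succ', mul_assoc]
    exact (norm_avgStep_le hk _ _).trans (by gcongr)

theorem sum_proc (hk : k ≠ 0) {ω : Ω} (hA : ∀ j, #(A j ω) = k) (m : ℕ) :
    ∑ i, proc k x0 A ω m i = ∑ i, x0 i := by
  induction m with
  | zero => rfl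
  | succ m ih => rw [proc_succ, sum_avgStep (hA m) hk, ih]

end AveragingProcess

section Probability

open Finset

variable {Ω : Type*} {m mΩ : MeasurableSpace Ω} {μ : Measure Ω}

theorem ae_of_measure_preimage_singleton_eq_zero {β : Type*} [Countable β] {Y : Ω → β}
    {p : β → Prop} (h : ∀ b, ¬ p b → μ (Y ⁻¹' {b}) = 0) : ∀ᵐ ω ∂μ, p (Y ω) :=
  (measure_preimage_eq_zero_iff_of_countable (Set.to_countable {b | ¬ p b})).mpr h

theorem ProbabilityTheory.iIndepFun.indep_comap_iSup_Iio {β : Type*} [MeasurableSpace β]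
    {A : ℕ → Ω → β} (hA : ∀ j, Measurable (A j)) (hind : iIndepFun A μ) (l : ℕ) :
    Indep (MeasurableSpace.comap (A l) inferInstance)
      (⨆ j ∈ Set.Iio l, MeasurableSpace.comap (A j) inferInstance) μ := by
  simpa using indep_iSup_of_disjoint (fun j => (hA j).comap_le) hind
    (S := {l}) (T := Set.Iio l) (by simp)

variable [IsFiniteMeasure μ]

theorem condExp_comp_indep_eq_sum {β : Type*} [Fintype β]
    [MeasurableSpace β] [MeasurableSingletonClass β] (hm : m ≤ mΩ) {Y : Ω → β}
    (hY : Measurable Y) (hind : Indep (MeasurableSpace.comap Y ‹_›) m μ) {g : β → Ω → ℝ}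
    (hg : ∀ b, StronglyMeasurable[m] (g b)) (hgi : ∀ b, Integrable (g b) μ) :
    μ[fun ω => g (Y ω) ω | m] =ᵐ[μ] fun ω => ∑ b, μ.real (Y ⁻¹' {b}) * g b ω := by
  classical
  have hYb : ∀ b, MeasurableSet (Y ⁻¹' {b}) := fun b => hY (measurableSet_singleton b)
  have hint : ∀ b, Integrable (g b * (Y ⁻¹' {b}).indicator 1) μ := fun b =>
    (hgi b).mul_bdd (aestronglyMeasurable_const.indicator (hYb b))
      (ae_of_all _ fun ω => (norm_indicator_le_norm_self _ ω).trans_eq norm_one)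
  have hdec : (fun ω => g (Y ω) ω) = ∑ b, g b * (Y ⁻¹' {b}).indicator 1 := by
    ext ω
    simp [Set.indicator_apply]
  have hterm : ∀ b, μ[g b * (Y ⁻¹' {b}).indicator 1 | m]
      =ᵐ[μ] fun ω => μ.real (Y ⁻¹' {b}) * g b ω := by
    intro b
    have hI : μ[(Y ⁻¹' {b}).indicator 1 | m] =ᵐ[μ] fun _ => μ.real (Y ⁻¹' {b}) := by
      rw [← integral_indicator_one (hYb b)]
      exact condExp_indep_eq hY.comap_le hm
        (stronglyMeasurable_const.indicator ⟨{b}, measurableSet_singleton b, rfl⟩) hind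
    filter_upwards [condExp_mul_of_stronglyMeasurable_left (hg b) (hint b)
      ((integrable_const 1).indicator (hYb b)), hI] with ω h₁ h₂
    rw [h₁, Pi.mul_apply, h₂, mul_comm]
  rw [hdec]
  filter_upwards [condExp_finsetSum (fun b _ => hint b) m, ae_all_iff.mpr hterm] with ω h₁ h₂
  rw [h₁, Finset.sum_apply]
  exact sum_congr rfl fun b _ => h₂ b

theorem stronglyMeasurable_sum_sq {ι : Type*} [Fintype ι] {X : Ω → ι → ℝ}
    (hX : Measurable[m] X) : StronglyMeasurable[m] fun ω => ∑ i, X ω i ^ 2 :=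
  (by fun_prop : Measurable fun y : ι → ℝ => ∑ i, y i ^ 2).comp hX |>.stronglyMeasurable

theorem integrable_sum_sq_of_norm_le {ι : Type*} [Fintype ι] {X : Ω → ι → ℝ}
    (hX : Measurable X) {C : ℝ} (hC : ∀ ω, ‖X ω‖ ≤ C) :
    Integrable (fun ω => ∑ i, X ω i ^ 2) μ := by
  refine .of_bound (stronglyMeasurable_sum_sq hX).aestronglyMeasurable (Fintype.card ι * C ^ 2)
    (ae_of_all _ fun ω => ?_)
  rw [Real.norm_of_nonneg (by positivity), ← nsmul_eq_mul, ← card_univ]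
  refine sum_le_card_nsmul _ _ _ fun i _ => sq_le_sq.mpr ?_
  rw [← Real.norm_eq_abs]
  exact (norm_le_pi_norm (X ω) i).trans ((hC ω).trans (le_abs_self C))

variable {n k : ℕ}

theorem condExp_sum_sq_avgStep (hk : 2 ≤ k) (hkn : k ≤ n) (hm : m ≤ mΩ)
    {X : Ω → Fin n → ℝ} (hXm : Measurable[m] X) {C : ℝ} (hC : ∀ ω, ‖X ω‖ ≤ C)
    (hX0 : ∀ᵐ ω ∂μ, ∑ i, X ω i = 0) {Y : Ω → Finset (Fin n)} (hY : Measurable Y)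
    (hind : Indep (MeasurableSpace.comap Y inferInstance) m μ)
    (hunif : ∀ s, μ (Y ⁻¹' {s}) = if #s = k then ((n.choose k : ENNReal))⁻¹ else 0) :
    μ[fun ω => ∑ i, avgStep k (Y ω) (X ω) i ^ 2 | m]
      =ᵐ[μ] fun ω => avgRate n k * ∑ i, X ω i ^ 2 := by
  have hmeas : ∀ s, Measurable[m] fun ω => avgStep k s (X ω) := fun s =>
    (measurable_avgStep s).comp hXm
  have hprob : ∀ s, μ.real (Y ⁻¹' {s}) = if #s = k then ((n.choose k : ℝ))⁻¹ else 0 := by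
    intro s
    rw [measureReal_def, hunif]
    split_ifs <;> simp
  have hchoose : (n.choose k : ℝ) ≠ 0 := by exact_mod_cast (Nat.choose_pos hkn).ne'
  filter_upwards [condExp_comp_indep_eq_sum hm hY hind
      (g := fun s ω => ∑ i, avgStep k s (X ω) i ^ 2)
      (fun s => stronglyMeasurable_sum_sq (hmeas s))
      (fun s => integrable_sum_sq_of_norm_le ((hmeas s).mono hm le_rfl)
        fun ω => (norm_avgStep_le (by omega) s (X ω)).trans
          (mul_le_mul_of_nonneg_left (hC ω) (Nat.cast_nonneg n))), hX0] with ω h₁ h₂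
  simp_rw [h₁, hprob, ite_mul, zero_mul, ← sum_filter, univ_filter_card_eq, ← mul_sum,
    sum_powersetCard_sum_sq_avgStep hk hkn h₂]
  field_simp

end Probability

section Martingale

variable {Ω : Type*} {mΩ : MeasurableSpace Ω} {μ : Measure Ω} [IsFiniteMeasure μ]
  {ℱ : Filtration ℕ mΩ}

theorem martingale_div_pow_of_condExp_succ {S : ℕ → Ω → ℝ} {τ : ℝ} (hτ : τ ≠ 0)
    (hadp : StronglyAdapted ℱ S) (hint : ∀ l, Integrable (S l) μ)
    (hstep : ∀ l, μ[S (l + 1) | ℱ l] =ᵐ[μ] fun ω => τ * S l ω) :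
    Martingale (fun l ω => S l ω / τ ^ l) ℱ μ := by
  have hdiv : ∀ l, (fun ω => S l ω / τ ^ l) = (τ ^ l)⁻¹ • S l := fun l => by
    ext ω
    simp [div_eq_inv_mul]
  refine martingale_nat (fun l => ?_) (fun l => (hint l).div_const _) fun l => ?_
  · simpa only [hdiv] using (hadp l).const_smul (τ ^ l)⁻¹
  · rw [hdiv (l + 1)]
    filter_upwards [condExp_smul (τ ^ (l + 1))⁻¹ (S (l + 1)) (ℱ l), hstep l] with ω h₁ h₂
    rw [h₁, Pi.smul_apply, h₂, smul_eq_mul, pow_succ]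
    field_simp

theorem MeasureTheory.Martingale.exists_ae_tendsto_of_nonneg {M : ℕ → Ω → ℝ}
    (hM : Martingale M ℱ μ) (hnonneg : ∀ l ω, 0 ≤ M l ω) :
    ∀ᵐ ω ∂μ, ∃ c, Tendsto (fun l => M l ω) atTop (nhds c) := by
  refine hM.submartingale.exists_ae_tendsto_of_bdd (R := (∫ ω, M 0 ω ∂μ).toNNReal) fun l => ?_
  have hint : ∫ ω, M l ω ∂μ = ∫ ω, M 0 ω ∂μ :=
    (integral_condExp (ℱ.le 0)).symm.trans (integral_congr_ae (hM.condExp_ae_eq l.zero_le))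
  rw [eLpNorm_one_eq_lintegral_enorm, ← hint,
    lintegral_congr fun ω => Real.enorm_eq_ofReal (hnonneg l ω),
    ← ofReal_integral_eq_lintegral_ofReal (hM.integrable l) (ae_of_all _ (hnonneg l))]
  rfl

end Martingale

/-- For the `k`-averaging process started from a mean-zero vector, with
`τ = 1 - (k-1)/(n-1)`, the process `M_l = S_n(l)/τ^l` is a nonnegative martingale with
respect to the natural filtration of the process, and hence `lim_l S_n(l)/τ^l` exists
and is finite almost surely. -/
theorem averaging_sq_sum_martingale
    (n k : ℕ) (hk : 2 ≤ k) (hn : k < n)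
    (Ω : Type*) [mΩ : MeasurableSpace Ω]
    (μ : Measure Ω) [IsProbabilityMeasure μ]
    (A : ℕ → Ω → Finset (Fin n))
    (hmeas : ∀ m, Measurable (A m))
    (hindep : iIndepFun (m := fun _ : ℕ => inferInstance) A μ)
    (hunif : ∀ (m : ℕ) (s : Finset (Fin n)),
      μ (A m ⁻¹' {s}) = if s.card = k then ((n.choose k : ENNReal))⁻¹ else 0)
    (x0 : Fin n → ℝ) (hx0 : ∑ i, x0 i = 0)
    (ℱ : Filtration ℕ mΩ)
    (hℱ : ∀ l, ℱ l
      = ⨆ m ∈ Set.Iic l, MeasurableSpace.comap (fun ω => proc k x0 A ω m) inferInstance)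
    (M : ℕ → Ω → ℝ)
    (hM : ∀ l ω, M l ω
      = (∑ i, (proc k x0 A ω l i) ^ 2) / (1 - ((k : ℝ) - 1) / ((n : ℝ) - 1)) ^ l) :
    Martingale M ℱ μ ∧ (∀ l ω, 0 ≤ M l ω) ∧
      ∀ᵐ ω ∂μ, ∃ c : ℝ, Tendsto (fun l => M l ω) atTop (nhds c) := by
  obtain rfl : M = fun l ω => (∑ i, proc k x0 A ω l i ^ 2) / avgRate n k ^ l := funext₂ hM
  have hX : ∀ l, Measurable[ℱ l] fun ω => proc k x0 A ω l := fun l => by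
    rw [measurable_iff_comap_le, hℱ l]
    exact le_biSup (fun m => MeasurableSpace.comap (fun ω => proc k x0 A ω m) _) Set.self_mem_Iic
  have hℱA : ∀ l, ℱ l ≤ ⨆ j ∈ Set.Iio l, MeasurableSpace.comap (A j) inferInstance := by
    intro l
    rw [hℱ l]
    exact iSup₂_le fun j hj => (measurable_proc x0 A j).comap_le.trans
      (biSup_mono fun i hi => Set.mem_Iio.mpr (lt_of_lt_of_le hi hj))
  have hcard : ∀ᵐ ω ∂μ, ∀ j, (A j ω).card = k := ae_all_iff.mpr fun j =>
    ae_of_measure_preimage_singleton_eq_zero fun s hs => by rw [hunif, if_neg hs]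
  have hτ := avgRate_pos (by omega) hn
  have hmart := martingale_div_pow_of_condExp_succ (μ := μ) hτ.ne'
    (fun l => stronglyMeasurable_sum_sq (hX l))
    (fun l => integrable_sum_sq_of_norm_le ((hX l).mono (ℱ.le l) le_rfl)
      (norm_proc_le x0 A (by omega) · l))
    fun l => condExp_sum_sq_avgStep hk hn.le (ℱ.le l) (hX l) (norm_proc_le x0 A (by omega) · l)
      (hcard.mono fun ω hω => (sum_proc x0 A (by omega) hω l).trans hx0) (hmeas l)
      (indep_of_indep_of_le_right (hindep.indep_comap_iSup_Iio hmeas l) (hℱA l)) (hunif l)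
  have hnonneg : ∀ l ω, 0 ≤ (∑ i, proc k x0 A ω l i ^ 2) / avgRate n k ^ l :=
    fun l ω => by positivity
  exact ⟨hmart, hnonneg, hmart.exists_ae_tendsto_of_nonneg hnonneg⟩

end
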